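/- Let K_1, K_2, K_3 be pairwise distinct (k+1)-element subsets of {1, …, n} such that K_i ⊆ K_j ∪ K_l for every permutation (i, j, l) of (1, 2, 3). Set T = K_1 ∩ K_2 ∩ K_3, t = |T|, and E = ⋂_{r∈T} ker l_r, a (k−t)-dimensional subspace of ℂ^k. Then: (a) the restrictions l_r|_E for r ∈ {1, …, n} ∖ T are n − t linear functionals on E of which every k − t are linearly independent; and (b) the codimension of D_{K_1} ∩ D_{K_2} ∩ D_{K_3} in ℂ^n equals the codimension of D'_{K_1∖T} ∩ D'_{K_2∖T} ∩ D'_{K_3∖T} in ℂ^{n−t}, where D' denotes the subspaces of the discriminantal arrangement attached to the restricted functionals (l_r|_E)_{r∉T}. -/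
import Mathlib


open Module Submodule

/-- The subspace `D_J ⊆ ℂ^ι` of translation vectors `x` for which the translated
hyperplanes `{l i = x i}`, `i ∈ J`, have a common point. -/
noncomputable def DD {ι V : Type*} [AddCommGroup V] [Module ℂ V]
    (l : ι → Module.Dual ℂ V) (J : Finset ι) : Submodule ℂ (ι → ℂ) where
  carrier := {x | ∃ y : V, ∀ i ∈ J, x i = l i y}
  add_mem' := by
    rintro a b ⟨y, hy⟩ ⟨z, hz⟩
    exact ⟨y + z, fun i hi => by simp [hy i hi, hz i hi]⟩
  zero_mem' := ⟨0, fun i _ => by simp⟩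
  smul_mem' := by
    rintro c a ⟨y, hy⟩
    exact ⟨c • y, fun i hi => by simp [hy i hi]⟩

lemma pi_surj_of_li {η V : Type*} [Fintype η]
    [AddCommGroup V] [Module ℂ V]
    (f : η → Module.Dual ℂ V) (hf : LinearIndependent ℂ f) :
    Function.Surjective (LinearMap.pi f : V →ₗ[ℂ] (η → ℂ)) := by
  classical
  rw [← LinearMap.range_eq_top]
  by_contra hne
  obtain ⟨φ, hφ0, hφ⟩ := Submodule.exists_dual_map_eq_bot_of_lt_top
    (lt_top_iff_ne_top.2 hne) inferInstance
  have hvan : ∀ v : V, φ (LinearMap.pi f v) = 0 := by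
    intro v
    have hm : φ (LinearMap.pi f v) ∈ (LinearMap.range (LinearMap.pi f)).map φ :=
      ⟨_, ⟨v, rfl⟩, rfl⟩
    simpa [hφ] using hm
  set c : η → ℂ := fun i => φ (fun j => if i = j then 1 else 0) with hc
  have hφz : ∀ z : η → ℂ, φ z = ∑ i, z i * c i := by
    intro z
    conv_lhs => rw [pi_eq_sum_univ z]
    rw [map_sum]
    refine Finset.sum_congr rfl fun i _ => ?_
    rw [map_smul, smul_eq_mul]
  have hcz : ∀ i, c i = 0 := by
    refine Fintype.linearIndependent_iff.mp hf c ?_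
    ext v
    have h := hvan v
    rw [hφz] at h
    simpa [LinearMap.pi_apply, mul_comm] using h
  exact hφ0 (LinearMap.ext fun z => by rw [hφz]; simp [hcz])

lemma mem_DD {ι V : Type*} [AddCommGroup V] [Module ℂ V]
    (l : ι → Module.Dual ℂ V) (J : Finset ι) (x : ι → ℂ) :
    x ∈ DD l J ↔ ∃ y : V, ∀ i ∈ J, x i = l i y := Iff.rfl

set_option maxHeartbeats 1000000 in
/-- reduction (\ref{intersection}): for pairwise distinct `(k+1)`-sets
`K₁, K₂, K₃`, each contained in the union of the other two, with `T = K₁ ∩ K₂ ∩ K₃`,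
`t = |T|` and `E = ⋂_{r ∈ T} ker l_r`: (a) `E` has dimension `k - t` and the `n - t`
restricted functionals `l_r|_E`, `r ∉ T`, have every `k - t` of them linearly independent;
(b) the codimension of `D_{K₁} ∩ D_{K₂} ∩ D_{K₃}` in `ℂ^n` equals the codimension of
`D'_{K₁∖T} ∩ D'_{K₂∖T} ∩ D'_{K₃∖T}` in `ℂ^{n-t}` for the restricted arrangement. -/
theorem stmt13 (k n : ℕ) (hk : 0 < k) (hkn : k < n)
    (l : Fin n → Module.Dual ℂ (Fin k → ℂ))
    (hgen : ∀ S : Finset (Fin n), S.card = k → LinearIndependent ℂ (fun i : S => l i.1))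
    (K₁ K₂ K₃ : Finset (Fin n))
    (hne₁₂ : K₁ ≠ K₂) (hne₁₃ : K₁ ≠ K₃) (hne₂₃ : K₂ ≠ K₃)
    (hc₁ : K₁.card = k + 1) (hc₂ : K₂.card = k + 1) (hc₃ : K₃.card = k + 1)
    (hsub₁ : K₁ ⊆ K₂ ∪ K₃) (hsub₂ : K₂ ⊆ K₁ ∪ K₃) (hsub₃ : K₃ ⊆ K₁ ∪ K₂)
    (T : Finset (Fin n)) (hT : T = K₁ ∩ K₂ ∩ K₃) (t : ℕ) (ht : t = T.card)
    (E : Submodule ℂ (Fin k → ℂ)) (hE : E = ⨅ r ∈ T, LinearMap.ker (l r)) :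
    (Tᶜ.card = n - t ∧ Module.finrank ℂ ↥E = k - t ∧
      ∀ S : Finset ↥(Tᶜ), S.card = k - t →
        LinearIndependent ℂ (fun i : S => (l i.1.1).domRestrict E)) ∧
    n - Module.finrank ℂ ↥(DD l K₁ ⊓ DD l K₂ ⊓ DD l K₃) =
      (n - t) - Module.finrank ℂ
        ↥(DD (fun r : ↥(Tᶜ) => (l r.1).domRestrict E) (Finset.subtype (· ∈ Tᶜ) (K₁ \ T)) ⊓
          DD (fun r : ↥(Tᶜ) => (l r.1).domRestrict E) (Finset.subtype (· ∈ Tᶜ) (K₂ \ T)) ⊓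
          DD (fun r : ↥(Tᶜ) => (l r.1).domRestrict E) (Finset.subtype (· ∈ Tᶜ) (K₃ \ T))) := by
  classical
  have hTK₁ : T ⊆ K₁ := by
    rw [hT]; exact Finset.inter_subset_left.trans Finset.inter_subset_left
  have hTK₂ : T ⊆ K₂ := by
    rw [hT]; exact Finset.inter_subset_left.trans Finset.inter_subset_right
  have hTK₃ : T ⊆ K₃ := by
    rw [hT]; exact Finset.inter_subset_right
  have htk : t ≤ k := by
    by_contra h
    push_neg at h
    have h1 : T = K₁ := Finset.eq_of_subset_of_card_le hTK₁ (by omega)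
    have h2 : T = K₂ := Finset.eq_of_subset_of_card_le hTK₂ (by omega)
    exact hne₁₂ (h1 ▸ h2)
  have htn : t ≤ n := by
    rw [ht]; simpa using T.card_le_univ
  obtain ⟨S₀, hTS₀, hS₀⟩ := Finset.exists_superset_card_eq
    (s := T) (n := k) (by omega) (by simpa using hkn.le)
  have hTind : LinearIndependent ℂ (fun r : T => l r.1) := by
    have h := (hgen S₀ hS₀).comp (fun i : T => (⟨i.1, hTS₀ i.2⟩ : S₀))
      (fun a b hab => Subtype.ext (by simpa using hab))
    exact h
  set LT := (LinearMap.pi (fun r : T => l r.1) : (Fin k → ℂ) →ₗ[ℂ] (T → ℂ)) with hLTdef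
  have hLTsurj : Function.Surjective LT := pi_surj_of_li _ hTind
  have hEker : E = LinearMap.ker LT := by
    rw [hE, hLTdef, LinearMap.ker_pi]
    ext y
    simp [Submodule.mem_iInf]
  have hEmem : ∀ y, y ∈ E ↔ ∀ r ∈ T, l r y = 0 := by
    intro y; rw [hE]; simp [Submodule.mem_iInf]
  obtain ⟨g, hg⟩ := LT.exists_rightInverse_of_surjective (LinearMap.range_eq_top.2 hLTsurj)
  have hgap : ∀ z, LT (g z) = z := fun z => by
    have := LinearMap.ext_iff.mp hg z; simpa using this
  have hcardT : Fintype.card ↥T = t := by rw [Fintype.card_coe, ht]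
  have hcardTc : Fintype.card ↥(Tᶜ : Finset (Fin n)) = n - t := by
    rw [Fintype.card_coe, Finset.card_compl, ht]; simp
  -- (a1)
  have ha1 : (Tᶜ : Finset (Fin n)).card = n - t := by
    rw [Finset.card_compl, ht]; simp
  -- (a2)
  have ha2 : finrank ℂ ↥E = k - t := by
    have h1 := LT.finrank_range_add_finrank_ker
    rw [LinearMap.range_eq_top.2 hLTsurj, finrank_top, finrank_pi, finrank_pi, hcardT,
      Fintype.card_fin] at h1
    rw [hEker] at *
    omega
  -- (a3)
  have ha3 : ∀ S : Finset ↥(Tᶜ : Finset (Fin n)), S.card = k - t →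
      LinearIndependent ℂ (fun i : S => (l i.1.1).domRestrict E) := by
    intro S hScard
    rw [Fintype.linearIndependent_iff]
    intro c hc i₀
    set F : Module.Dual ℂ (Fin k → ℂ) := ∑ i : S, c i • l i.1.1 with hF
    have hFE : ∀ y ∈ E, F y = 0 := by
      intro y hy
      have h := congrArg (fun h : Module.Dual ℂ ↥E => h ⟨y, hy⟩) hc
      simpa [hF, LinearMap.sum_apply] using h
    set d : {x // x ∈ T} → ℂ := fun r => F (g (fun j => if r = j then 1 else 0)) with hd
    have hFdec : F = ∑ r : {x // x ∈ T}, d r • l r.1 := by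
      refine LinearMap.ext fun y => ?_
      have hyk : y - g (LT y) ∈ E := by
        rw [hEker]
        simp [LinearMap.mem_ker, map_sub, hgap]
      have h0 : F y = F (g (LT y)) := by
        have h := hFE _ hyk
        rw [map_sub, sub_eq_zero] at h
        exact h
      rw [h0]
      conv_lhs => rw [pi_eq_sum_univ (LT y)]
      rw [map_sum, map_sum, LinearMap.sum_apply]
      refine Finset.sum_congr rfl fun r _ => ?_
      rw [map_smul, map_smul, LinearMap.smul_apply, smul_eq_mul, smul_eq_mul]
      have hLTy : LT y r = l r.1 y := rfl
      rw [hLTy, mul_comm]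
    set q : Fin n → ℂ := fun j =>
      (∑ r : {x // x ∈ T}, if r.1 = j then -(d r) else 0) +
        ∑ i : S, if i.1.1 = j then c i else 0 with hq
    set SI : Finset (Fin n) := S.image (fun i => i.1) with hSI
    have hSImem : ∀ i : S, i.1.1 ∈ SI := fun i => Finset.mem_image_of_mem _ i.2
    have hSInotT : ∀ j ∈ SI, j ∉ T := by
      intro j hj
      obtain ⟨i, hiS, rfl⟩ := Finset.mem_image.mp hj
      exact Finset.mem_compl.mp i.2
    have hSIT : Disjoint SI T := Finset.disjoint_left.mpr hSInotT
    have hSIcard : SI.card = k - t := by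
      rw [hSI, Finset.card_image_of_injective _ (fun a b hab => Subtype.ext hab)]
      exact hScard
    set S' : Finset (Fin n) := SI ∪ T with hS'
    have hS'card : S'.card = k := by
      rw [hS', Finset.card_union_of_disjoint hSIT, hSIcard, ← ht]
      omega
    have hTS' : T ⊆ S' := Finset.subset_union_right
    have hSIS' : SI ⊆ S' := Finset.subset_union_left
    have e2 : ∑ j ∈ S', (∑ r : {x // x ∈ T}, if r.1 = j then -(d r) else 0) • l j =
        ∑ r : {x // x ∈ T}, (-(d r)) • l r.1 := by
      have h1 : ∀ j ∈ S', (∑ r : {x // x ∈ T}, if r.1 = j then -(d r) else 0) • l j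
          = ∑ r : {x // x ∈ T}, if r.1 = j then (-(d r)) • l j else 0 := by
        intro j _
        rw [Finset.sum_smul]
        exact Finset.sum_congr rfl fun r _ => by rw [ite_smul, zero_smul]
      rw [Finset.sum_congr rfl h1, Finset.sum_comm]
      refine Finset.sum_congr rfl fun r _ => ?_
      rw [Finset.sum_ite_eq S' r.1 (fun j => (-(d r)) • l j), if_pos (hTS' r.2)]
    have e3 : ∑ j ∈ S', (∑ i : S, if i.1.1 = j then c i else 0) • l j = F := by
      rw [hF]
      have h1 : ∀ j ∈ S', (∑ i : S, if i.1.1 = j then c i else 0) • l j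
          = ∑ i : S, if i.1.1 = j then c i • l j else 0 := by
        intro j _
        rw [Finset.sum_smul]
        exact Finset.sum_congr rfl fun i _ => by rw [ite_smul, zero_smul]
      rw [Finset.sum_congr rfl h1, Finset.sum_comm]
      refine Finset.sum_congr rfl fun i _ => ?_
      rw [Finset.sum_ite_eq S' i.1.1 (fun j => c i • l j), if_pos (hSIS' (hSImem i))]
    have hsum : ∑ j ∈ S', q j • l j = 0 := by
      have e1 : ∑ j ∈ S', q j • l j =
          (∑ j ∈ S', (∑ r : {x // x ∈ T}, if r.1 = j then -(d r) else 0) • l j) +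
            ∑ j ∈ S', (∑ i : S, if i.1.1 = j then c i else 0) • l j := by
        rw [← Finset.sum_add_distrib]
        refine Finset.sum_congr rfl fun j _ => ?_
        rw [hq]
        rw [add_smul]
      have e4 : ∑ r : {x // x ∈ T}, (-(d r)) • l r.1 = -F := by
        rw [hFdec, ← Finset.sum_neg_distrib]
        exact Finset.sum_congr rfl fun r _ => by rw [neg_smul]
      rw [e1, e2, e3, e4, neg_add_cancel]
    have hind := Fintype.linearIndependent_iff.mp (hgen S' hS'card)
    have hq0 : ∀ j : S', q j.1 = 0 := by
      refine hind (fun j => q j.1) ?_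
      rw [← hsum]
      exact Finset.sum_coe_sort S' (fun j => q j • l j)
    have hmem : i₀.1.1 ∈ S' := hSIS' (hSImem i₀)
    have h0 := hq0 ⟨i₀.1.1, hmem⟩
    simp only [hq] at h0
    have hz1 : (∑ r : {x // x ∈ T}, if r.1 = i₀.1.1 then -(d r) else 0) = 0 :=
      Finset.sum_eq_zero fun r _ => by
        rw [if_neg]
        intro hr
        exact (Finset.mem_compl.mp i₀.1.2) (hr ▸ r.2)
    have hz2 : (∑ i : S, if i.1.1 = i₀.1.1 then c i else 0) = c i₀ := by
      have h1 : ∀ i : S, (if i.1.1 = i₀.1.1 then c i else 0) = if i = i₀ then c i else 0 :=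
        fun i => if_congr ⟨fun h => Subtype.ext (Subtype.ext h), fun h => by rw [h]⟩ rfl rfl
      rw [Finset.sum_congr rfl (fun i _ => h1 i), Finset.sum_ite_eq' Finset.univ i₀ c,
        if_pos (Finset.mem_univ _)]
    rw [hz1, hz2, zero_add] at h0
    exact h0
  refine ⟨⟨ha1, ha2, ha3⟩, ?_⟩
  -- part (b)
  set res : (Fin n → ℂ) →ₗ[ℂ] ({x // x ∈ T} → ℂ) :=
    LinearMap.pi (fun r : {x // x ∈ T} => LinearMap.proj r.1) with hres
  set Φ : (Fin n → ℂ) →ₗ[ℂ] ({x // x ∈ Tᶜ} → ℂ) :=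
    LinearMap.pi (fun r : {x // x ∈ Tᶜ} => LinearMap.proj r.1 - (l r.1) ∘ₗ (g ∘ₗ res)) with hΦ
  have hΦapp : ∀ (x : Fin n → ℂ) (r : {x // x ∈ Tᶜ}), Φ x r = x r.1 - l r.1 (g (res x)) :=
    fun x r => rfl
  have hresapp : ∀ (x : Fin n → ℂ) (r : {x // x ∈ T}), res x r = x r.1 := fun x r => rfl
  have hgres : ∀ (x : Fin n → ℂ) (r : Fin n) (hr : r ∈ T), l r (g (res x)) = x r := by
    intro x r hr
    have h := congrArg (fun w : {x // x ∈ T} → ℂ => w ⟨r, hr⟩) (hgap (res x))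
    simpa [hLTdef, LinearMap.pi_apply, hresapp] using h
  have hΦsurj : Function.Surjective Φ := by
    intro z
    refine ⟨fun i => if h : i ∈ Tᶜ then z ⟨i, h⟩ else 0, ?_⟩
    have hres0 : res (fun i => if h : i ∈ Tᶜ then z ⟨i, h⟩ else 0) = 0 := by
      funext r
      rw [hresapp]
      exact dif_neg (fun hc => (Finset.mem_compl.mp hc) r.2)
    funext r
    rw [hΦapp, hres0, map_zero, map_zero, sub_zero, dif_pos r.2]
  have hcomap : ∀ K : Finset (Fin n), T ⊆ K →
      Submodule.comap Φ (DD (fun r : {x // x ∈ Tᶜ} => (l r.1).domRestrict E)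
        (Finset.subtype (· ∈ Tᶜ) (K \ T))) = DD l K := by
    intro K hTK
    ext x
    rw [Submodule.mem_comap, mem_DD, mem_DD]
    constructor
    · rintro ⟨z, hz⟩
      refine ⟨g (res x) + z.1, fun i hiK => ?_⟩
      by_cases hiT : i ∈ T
      · have h2 : l i z.1 = 0 := (hEmem z.1).mp z.2 i hiT
        rw [map_add, hgres x i hiT, h2, add_zero]
      · have hi' : (⟨i, Finset.mem_compl.2 hiT⟩ : {x // x ∈ Tᶜ}) ∈
            Finset.subtype (· ∈ Tᶜ) (K \ T) := by
          simp [Finset.mem_subtype, Finset.mem_sdiff, hiK, hiT]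
        have h := hz _ hi'
        rw [hΦapp] at h
        rw [map_add]
        have h' : l i z.1 = x i - l i (g (res x)) := h.symm
        rw [h']
        ring
    · rintro ⟨y, hy⟩
      have hyE : y - g (res x) ∈ E := by
        rw [hEmem]
        intro r hr
        rw [map_sub, hgres x r hr, ← hy r (hTK hr), sub_self]
      refine ⟨⟨y - g (res x), hyE⟩, fun i hi => ?_⟩
      have hiK : i.1 ∈ K := (Finset.mem_sdiff.mp (Finset.mem_subtype.mp hi)).1
      rw [hΦapp]
      have h2 : (l i.1).domRestrict E ⟨y - g (res x), hyE⟩ = l i.1 y - l i.1 (g (res x)) := by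
        rw [LinearMap.domRestrict_apply, map_sub]
      rw [h2, hy i.1 hiK]
  have hDcomap : DD l K₁ ⊓ DD l K₂ ⊓ DD l K₃ =
      Submodule.comap Φ
        (DD (fun r : {x // x ∈ Tᶜ} => (l r.1).domRestrict E) (Finset.subtype (· ∈ Tᶜ) (K₁ \ T)) ⊓
         DD (fun r : {x // x ∈ Tᶜ} => (l r.1).domRestrict E) (Finset.subtype (· ∈ Tᶜ) (K₂ \ T)) ⊓
         DD (fun r : {x // x ∈ Tᶜ} => (l r.1).domRestrict E) (Finset.subtype (· ∈ Tᶜ) (K₃ \ T))) := by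
    rw [Submodule.comap_inf, Submodule.comap_inf, hcomap K₁ hTK₁, hcomap K₂ hTK₂, hcomap K₃ hTK₃]
  set D' : Submodule ℂ ({x // x ∈ Tᶜ} → ℂ) :=
      DD (fun r : {x // x ∈ Tᶜ} => (l r.1).domRestrict E) (Finset.subtype (· ∈ Tᶜ) (K₁ \ T)) ⊓
      DD (fun r : {x // x ∈ Tᶜ} => (l r.1).domRestrict E) (Finset.subtype (· ∈ Tᶜ) (K₂ \ T)) ⊓
      DD (fun r : {x // x ∈ Tᶜ} => (l r.1).domRestrict E) (Finset.subtype (· ∈ Tᶜ) (K₃ \ T))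
    with hD'
  rw [hDcomap]
  set f : ↥(Submodule.comap Φ D') →ₗ[ℂ] ({x // x ∈ Tᶜ} → ℂ) :=
    Φ ∘ₗ (Submodule.comap Φ D').subtype with hf
  have hrange : LinearMap.range f = D' := by
    rw [hf, LinearMap.range_comp, Submodule.range_subtype, Submodule.map_comap_eq,
      LinearMap.range_eq_top.2 hΦsurj, top_inf_eq]
  have hkerle : LinearMap.ker Φ ≤ Submodule.comap Φ D' := by
    intro x hx
    rw [Submodule.mem_comap, LinearMap.mem_ker.mp hx]
    exact D'.zero_mem
  have hkfr : finrank ℂ ↥(LinearMap.ker f) = finrank ℂ ↥(LinearMap.ker Φ) := by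
    have hmap : Submodule.map (Submodule.comap Φ D').subtype
        (Submodule.comap (Submodule.comap Φ D').subtype (LinearMap.ker Φ)) = LinearMap.ker Φ := by
      rw [Submodule.map_comap_eq, Submodule.range_subtype, inf_eq_right.2 hkerle]
    rw [hf, LinearMap.ker_comp, ← Submodule.finrank_map_subtype_eq (Submodule.comap Φ D'), hmap]
  have hrn1 := f.finrank_range_add_finrank_ker
  rw [hrange, hkfr] at hrn1
  have hrn2 := Φ.finrank_range_add_finrank_ker
  rw [LinearMap.range_eq_top.2 hΦsurj, finrank_top, finrank_pi, finrank_pi, hcardTc,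
    Fintype.card_fin] at hrn2
  omega
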